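/- Let W be an L_d^τ-admissible R-submodule of 𝒟 with respect to z₁,…,z_d. Then for all i = 1,…,d and n with n − e_i > 0, ann_R(W_{n−e_i}) ∘ W_n = W_{n−(n_i−1)e_i}; i.e., condition (3) of L_d^τ-admissibility implies the Gorenstein-style condition (4.2) of Elias–Rossi for each level. -/

import Mathlib

open MvPolynomial
open scoped Classical

noncomputable section

variable {m : ℕ} {K : Type*} [Field K]

/-- The divided power module `𝒟 = K_DP[X₁,…,X_m]`, realized as finitely supported
coefficient functions on monomials in the dual variables. -/
abbrev DP (m : ℕ) (K : Type*) [Field K] : Type _ := (Fin m →₀ ℕ) →₀ K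

/-- Contraction action of a polynomial on the divided power module:
`x^a ∘ X^b = X^(b-a)` if `a ≤ b` componentwise, and `0` otherwise. -/
def contract (f : MvPolynomial (Fin m) K) (F : DP m K) : DP m K :=
  ∑ a ∈ f.support, F.sum fun b x =>
    if a ≤ b then Finsupp.single (b - a) (MvPolynomial.coeff a f * x) else 0

/-- Total degree of a monomial exponent. -/
def mdeg (b : Fin m →₀ ℕ) : ℕ := b.sum fun _ e => e

/-- Degree of an element of the divided power module. -/
def DPdeg (F : DP m K) : ℕ := F.support.sup mdeg

/-- Top degree form of an element of the divided power module. -/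
def topForm (F : DP m K) : DP m K := F.filter fun b => mdeg b = DPdeg F

/-- A subset of `𝒟` which is an `R`-submodule under the contraction action. -/
def IsDPSubmodule (W : Set (DP m K)) : Prop :=
  (0 : DP m K) ∈ W ∧ (∀ F G, F ∈ W → G ∈ W → F + G ∈ W) ∧
    (∀ (c : K), ∀ F, F ∈ W → c • F ∈ W) ∧
    (∀ (f : MvPolynomial (Fin m) K), ∀ F, F ∈ W → contract f F ∈ W)

/-- The `R`-submodule of `𝒟` generated by a set. -/
def DPspan (S : Set (DP m K)) : Set (DP m K) := ⋂₀ {W | IsDPSubmodule W ∧ S ⊆ W}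

/-- The annihilator of a subset of `𝒟` in `R`. -/
def DPann (W : Set (DP m K)) : Set (MvPolynomial (Fin m) K) :=
  {f | ∀ F ∈ W, contract f F = 0}

/-- `n ∈ ℕ₊^d`. -/
def Pos {d : ℕ} (n : Fin d → ℕ) : Prop := ∀ i, 1 ≤ n i

/-- `n - eᵢ`. -/
def decE {d : ℕ} (n : Fin d → ℕ) (i : Fin d) : Fin d → ℕ :=
  Function.update n i (n i - 1)

/-- The common degree `s_n` of the generators `H n j`. -/
def sdeg {m d τ : ℕ} {K : Type*} [Field K]
    (H : (Fin d → ℕ) → Fin τ → DP m K) (n : Fin d → ℕ) : ℕ :=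
  Finset.univ.sup fun j => DPdeg (H n j)

/-- The submodule `W_n = ⟨H_n^j : j = 1,…,τ⟩` of `𝒟`. -/
def Wn {m d τ : ℕ} {K : Type*} [Field K]
    (H : (Fin d → ℕ) → Fin τ → DP m K) (n : Fin d → ℕ) : Set (DP m K) :=
  DPspan (Set.range (H n))

/-- `V_n^i`: the `K`-span of the dual monomials `Z₁^{k₁}⋯Z_m^{k_m}` with
`k_i ≤ n_i − 2` and `|k| ≤ s`. -/
def Vni {m d : ℕ} {K : Type*} [Field K] (hdm : d ≤ m) (s : ℕ) (n : Fin d → ℕ)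
    (i : Fin d) : Set (DP m K) :=
  {F | ∀ b ∈ F.support, b (Fin.castLE hdm i) ≤ n i - 2 ∧ mdeg b ≤ s}

/-- Condition (1) of `L_d^τ`-admissibility: for each `n`, the generators `H_n^j` have a
common degree `s_n` and their forms of degree `s_n` are linearly independent. -/
def Cond1 {m d τ : ℕ} {K : Type*} [Field K]
    (H : (Fin d → ℕ) → Fin τ → DP m K) : Prop :=
  ∀ n, Pos n → (∀ j, DPdeg (H n j) = sdeg H n) ∧
    LinearIndependent K fun j => topForm (H n j)

/-- Condition (2) of `L_d^τ`-admissibility with respect to the sequence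
`z_i = x_i`, `i = 1,…,d` (after a change of coordinates the general elements, resp.
the regular linear sequence, may be taken to be the first `d` variables, with
`𝒟 = K_DP[Z₁,…,Z_m]` in the dual coordinates):
`z_i ∘ H_n^j = H_{n−e_i}^j` if `n − e_i > 0`, and `0` otherwise. -/
def Cond2 {m d τ : ℕ} {K : Type*} [Field K] (hdm : d ≤ m)
    (H : (Fin d → ℕ) → Fin τ → DP m K) : Prop :=
  ∀ n, Pos n → ∀ (i : Fin d) (j : Fin τ),
    contract (MvPolynomial.X (Fin.castLE hdm i)) (H n j) =
      if 2 ≤ n i then H (decE n i) j else 0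

/-- Condition (3) of `L_d^τ`-admissibility: `W_n ∩ V_n^i ⊆ W_{n−e_i}`. -/
def Cond3 {m d τ : ℕ} {K : Type*} [Field K] (hdm : d ≤ m)
    (H : (Fin d → ℕ) → Fin τ → DP m K) : Prop :=
  ∀ n, Pos n → ∀ i : Fin d, 2 ≤ n i →
    Wn H n ∩ Vni hdm (sdeg H n) n i ⊆ Wn H (decE n i)

/-- The generating set `{H_n^j : j = 1,…,τ, n ∈ ℕ₊^d}`. -/
def genSet {m d τ : ℕ} {K : Type*} [Field K]
    (H : (Fin d → ℕ) → Fin τ → DP m K) : Set (DP m K) :=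
  {F | ∃ n j, Pos n ∧ F = H n j}

/-- The family `H` is an `L_d^τ`-admissible system of generators. -/
def IsLdAdmissibleSystem {m d τ : ℕ} {K : Type*} [Field K] (hdm : d ≤ m)
    (H : (Fin d → ℕ) → Fin τ → DP m K) : Prop :=
  Cond1 H ∧ Cond2 hdm H ∧ Cond3 hdm H

/-!
Writing `z_i = X (Fin.castLE hdm i)`, iterating Condition (2) gives `z_i^{n_i-1} ∘ H_n^j = H_{n-(n_i-1)e_i}^j`,
while `z_i^{n_i-1}` kills the generators of `W_{n-e_i}`; this is the inclusion `⊇`.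
Conversely, if `f` annihilates `W_{n-e_i}` and `F ∈ W_n`, then `G = f ∘ F ∈ W_n` satisfies
`z_i ∘ G = f ∘ (z_i ∘ F) = 0`, since `z_i ∘ F ∈ W_{n-e_i}`. Hence no monomial of `G` involves `Z_i`,
so `G ∈ V_n^i` and Condition (3) puts `G` in `W_{n-e_i}`; repeating this lowers `n_i` down to `1`.
-/

theorem contract_apply (f : MvPolynomial (Fin m) K) (F : DP m K) (u : Fin m →₀ ℕ) :
    contract f F u = ∑ a ∈ f.support, coeff a f * F (u + a) := by
  simp only [contract, Finsupp.finsetSum_apply, Finsupp.sum_apply]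
  refine Finset.sum_congr rfl fun a _ => ?_
  have hcond : ∀ b : Fin m →₀ ℕ, (a ≤ b ∧ b - a = u) ↔ b = u + a := fun b =>
    ⟨fun ⟨hab, hb⟩ => by rw [← hb, tsub_add_cancel_of_le hab],
      fun hb => by subst hb; exact ⟨le_add_self, add_tsub_cancel_right u a⟩⟩
  simp only [apply_ite (fun G : DP m K => G u), Finsupp.single_apply, Finsupp.coe_zero,
    Pi.zero_apply, ← ite_and, hcond, Finsupp.sum_ite_eq', Finsupp.mem_support_iff, ite_not]
  split_ifs with h <;> simp [h]

theorem contract_apply_of_support_subset {f : MvPolynomial (Fin m) K} {s : Finset (Fin m →₀ ℕ)}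
    (hs : f.support ⊆ s) (F : DP m K) (u : Fin m →₀ ℕ) :
    contract f F u = ∑ a ∈ s, coeff a f * F (u + a) := by
  rw [contract_apply]
  exact Finset.sum_subset hs fun a _ ha => by rw [notMem_support_iff.1 ha, zero_mul]

theorem contract_monomial_apply (a : Fin m →₀ ℕ) (c : K) (F : DP m K) (u : Fin m →₀ ℕ) :
    contract (monomial a c) F u = c * F (u + a) := by
  rw [contract_apply_of_support_subset support_monomial_subset, Finset.sum_singleton,
    coeff_monomial, if_pos rfl]

theorem contract_X_apply (k : Fin m) (F : DP m K) (u : Fin m →₀ ℕ) :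
    contract (X k) F u = F (u + Finsupp.single k 1) := by
  rw [X, contract_monomial_apply, one_mul]

@[simp]
theorem contract_zero_right (f : MvPolynomial (Fin m) K) : contract f 0 = 0 := by
  ext u; simp [contract_apply]

theorem contract_add (f : MvPolynomial (Fin m) K) (F G : DP m K) :
    contract f (F + G) = contract f F + contract f G := by
  ext u; simp [contract_apply, mul_add, Finset.sum_add_distrib]

theorem contract_smul (f : MvPolynomial (Fin m) K) (c : K) (F : DP m K) :
    contract f (c • F) = c • contract f F := by
  ext u; simp [contract_apply, Finset.mul_sum, mul_left_comm]

theorem contract_add_left (f g : MvPolynomial (Fin m) K) (F : DP m K) :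
    contract (f + g) F = contract f F + contract g F := by
  ext u
  rw [Finsupp.add_apply, contract_apply_of_support_subset support_add,
    contract_apply_of_support_subset Finset.subset_union_left,
    contract_apply_of_support_subset Finset.subset_union_right, ← Finset.sum_add_distrib]
  simp only [coeff_add, add_mul]

theorem contract_mul (f g : MvPolynomial (Fin m) K) (F : DP m K) :
    contract (f * g) F = contract f (contract g F) := by
  induction f using MvPolynomial.induction_on' with
  | monomial a c =>
    induction g using MvPolynomial.induction_on' with
    | monomial b e =>
      ext u
      simp only [monomial_mul, contract_monomial_apply, add_comm a b, add_assoc, mul_assoc]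
    | add p q hp hq => rw [mul_add, contract_add_left, hp, hq, contract_add_left, contract_add]
  | add p q hp hq => rw [add_mul, contract_add_left, hp, hq, contract_add_left]

theorem contract_comm (f g : MvPolynomial (Fin m) K) (F : DP m K) :
    contract f (contract g F) = contract g (contract f F) := by
  rw [← contract_mul, mul_comm, contract_mul]

theorem contract_one (F : DP m K) : contract (1 : MvPolynomial (Fin m) K) F = F := by
  ext u; rw [← C_1, C_apply, contract_monomial_apply, one_mul, add_zero]

theorem exists_add_mem_support_of_mem_support_contract {f : MvPolynomial (Fin m) K}
    {F : DP m K} {u : Fin m →₀ ℕ} (hu : u ∈ (contract f F).support) :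
    ∃ a, u + a ∈ F.support := by
  rw [Finsupp.mem_support_iff, contract_apply] at hu
  obtain ⟨a, -, ha⟩ := Finset.exists_ne_zero_of_sum_ne_zero hu
  exact ⟨a, Finsupp.mem_support_iff.2 (right_ne_zero_of_mul ha)⟩

theorem eq_zero_of_mem_support_of_contract_X_eq_zero {k : Fin m} {F : DP m K}
    (h : contract (X k) F = 0) {b : Fin m →₀ ℕ} (hb : b ∈ F.support) : b k = 0 := by
  by_contra hbk
  have hle : Finsupp.single k 1 ≤ b := Finsupp.single_le_iff.2 (Nat.one_le_iff_ne_zero.2 hbk)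
  have := contract_X_apply k F (b - Finsupp.single k 1)
  rw [h, tsub_add_cancel_of_le hle] at this
  exact Finsupp.mem_support_iff.1 hb this.symm

section Span

variable {S W : Set (DP m K)}

theorem isDPSubmodule_DPspan (S : Set (DP m K)) : IsDPSubmodule (DPspan S) :=
  ⟨fun _ hW => hW.1.1, fun F G hF hG V hV => hV.1.2.1 F G (hF V hV) (hG V hV),
    fun c F hF V hV => hV.1.2.2.1 c F (hF V hV), fun f F hF V hV => hV.1.2.2.2 f F (hF V hV)⟩

theorem subset_DPspan (S : Set (DP m K)) : S ⊆ DPspan S := fun _ hF _ hW => hW.2 hF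

theorem DPspan_subset (hW : IsDPSubmodule W) (h : S ⊆ W) : DPspan S ⊆ W :=
  fun _ hF => hF W ⟨hW, h⟩

theorem IsDPSubmodule.contract_mem (hW : IsDPSubmodule W) (f : MvPolynomial (Fin m) K)
    {F : DP m K} (hF : F ∈ W) : contract f F ∈ W :=
  hW.2.2.2 f F hF

theorem isDPSubmodule_singleton_zero : IsDPSubmodule ({0} : Set (DP m K)) := by
  refine ⟨rfl, ?_, ?_, ?_⟩ <;> rintro _ _ rfl <;> simp

theorem IsDPSubmodule.preimage_contract (hW : IsDPSubmodule W) (g : MvPolynomial (Fin m) K) :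
    IsDPSubmodule {F | contract g F ∈ W} := by
  refine ⟨?_, fun F G hF hG => ?_, fun c F hF => ?_, fun f F hF => ?_⟩
  · simpa using hW.1
  · simpa [contract_add] using hW.2.1 _ _ hF hG
  · simpa [contract_smul] using hW.2.2.1 c _ hF
  · simpa [contract_comm g f] using hW.contract_mem f hF

theorem contract_mem_of_mem_DPspan (hW : IsDPSubmodule W) {g : MvPolynomial (Fin m) K}
    (hS : ∀ F ∈ S, contract g F ∈ W) {F : DP m K} (hF : F ∈ DPspan S) : contract g F ∈ W :=
  DPspan_subset (hW.preimage_contract g) hS hF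

theorem mem_DPann_DPspan {f : MvPolynomial (Fin m) K} (hS : ∀ F ∈ S, contract f F = 0) :
    f ∈ DPann (DPspan S) :=
  fun _ hF => contract_mem_of_mem_DPspan isDPSubmodule_singleton_zero hS hF

theorem isDPSubmodule_supported {P : (Fin m →₀ ℕ) → Prop} (hP : ∀ u a, P (u + a) → P u) :
    IsDPSubmodule {F : DP m K | ∀ b ∈ F.support, P b} := by
  refine ⟨by simp, fun F G hF hG b hb => ?_, fun _ _ hF b hb => hF b (Finsupp.support_smul hb),
    fun f F hF b hb => ?_⟩
  · rcases Finset.mem_union.1 (Finsupp.support_add hb) with h | h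
    exacts [hF b h, hG b h]
  · obtain ⟨a, ha⟩ := exists_add_mem_support_of_mem_support_contract hb
    exact hP b a (hF _ ha)

end Span

theorem mdeg_mono : Monotone (mdeg : (Fin m →₀ ℕ) → ℕ) := Finsupp.degree_mono

theorem mdeg_le_sdeg_of_mem_Wn {d τ : ℕ} (H : (Fin d → ℕ) → Fin τ → DP m K) (n : Fin d → ℕ)
    {F : DP m K} (hF : F ∈ Wn H n) {b : Fin m →₀ ℕ} (hb : b ∈ F.support) :
    mdeg b ≤ sdeg H n := by
  refine DPspan_subset (isDPSubmodule_supported (P := (mdeg · ≤ sdeg H n))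
    fun u a h => (mdeg_mono le_self_add).trans h) ?_ hF b hb
  rintro _ ⟨j, rfl⟩ b hb
  exact (Finset.le_sup hb).trans (Finset.le_sup (f := fun j => DPdeg (H n j)) (Finset.mem_univ j))

section Admissible

variable {d τ : ℕ} {hdm : d ≤ m} {H : (Fin d → ℕ) → Fin τ → DP m K} {n : Fin d → ℕ} {i : Fin d}

theorem Pos.decE (hn : Pos n) (h2 : 2 ≤ n i) : Pos (decE n i) := by
  intro j
  rcases eq_or_ne j i with rfl | hj
  · rw [_root_.decE, Function.update_self]; omega
  · rw [_root_.decE, Function.update_of_ne hj]; exact hn j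

theorem Pos.update_one (hn : Pos n) : Pos (Function.update n i 1) := by
  intro j
  rcases eq_or_ne j i with rfl | hj
  · rw [Function.update_self]
  · rw [Function.update_of_ne hj]; exact hn j

theorem decE_self (n : Fin d → ℕ) (i : Fin d) : decE n i i = n i - 1 :=
  Function.update_self ..

theorem update_decE_one (n : Fin d → ℕ) (i : Fin d) :
    Function.update (decE n i) i 1 = Function.update n i 1 :=
  Function.update_idem ..

theorem contract_X_mem_Wn_decE (h2c : Cond2 hdm H) (hn : Pos n) (h2 : 2 ≤ n i) {F : DP m K}
    (hF : F ∈ Wn H n) : contract (X (Fin.castLE hdm i)) F ∈ Wn H (decE n i) := by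
  refine contract_mem_of_mem_DPspan (isDPSubmodule_DPspan _) ?_ hF
  rintro _ ⟨j, rfl⟩
  rw [h2c n hn i j, if_pos h2]
  exact subset_DPspan _ ⟨j, rfl⟩

theorem contract_X_pow_H (h2c : Cond2 hdm H) (hn : Pos n) (j : Fin τ) :
    contract (X (Fin.castLE hdm i) ^ (n i - 1)) (H n j) = H (Function.update n i 1) j := by
  induction hk : n i - 1 generalizing n with
  | zero =>
    rw [pow_zero, contract_one, show 1 = n i by have := hn i; omega, Function.update_eq_self]
  | succ k ih =>
    have h2 : 2 ≤ n i := by omega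
    rw [pow_succ, contract_mul, h2c n hn i j, if_pos h2, ih (hn.decE h2)
      (by rw [decE_self]; omega), update_decE_one]

theorem X_pow_mem_DPann_Wn_decE (h2c : Cond2 hdm H) (hn : Pos n) (h2 : 2 ≤ n i) :
    X (Fin.castLE hdm i) ^ (n i - 1) ∈ DPann (Wn H (decE n i)) := by
  refine mem_DPann_DPspan ?_
  rintro _ ⟨j, rfl⟩
  have hn' := hn.decE h2
  rw [show n i - 1 = decE n i i - 1 + 1 by rw [decE_self]; omega, pow_succ', contract_mul,
    contract_X_pow_H h2c hn' j, h2c _ hn'.update_one i j, Function.update_self, if_neg (by omega)]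

theorem mem_Wn_update_one_of_contract_X_eq_zero (h3c : Cond3 hdm H) (hn : Pos n) {G : DP m K}
    (hG : G ∈ Wn H n) (hGX : contract (X (Fin.castLE hdm i)) G = 0) :
    G ∈ Wn H (Function.update n i 1) := by
  induction hk : n i generalizing n with
  | zero => have := hn i; omega
  | succ k ih =>
    rcases k.eq_zero_or_pos with rfl | hk0
    · rwa [show 1 = n i by omega, Function.update_eq_self]
    have h2 : 2 ≤ n i := by omega
    have hV : G ∈ Vni hdm (sdeg H n) n i := fun b hb =>
      ⟨by rw [eq_zero_of_mem_support_of_contract_X_eq_zero hGX hb]; omega,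
        mdeg_le_sdeg_of_mem_Wn H n hG hb⟩
    rw [← update_decE_one]
    exact ih (hn.decE h2) (h3c n hn i h2 ⟨hG, hV⟩) (by rw [decE_self]; omega)

end Admissible

/-- Discussion 4.10. Let `W` be an `L_d^τ`-admissible `R`-submodule
of `𝒟` with respect to `z₁,…,z_d`. Then for all `i` and all `n` with `n − e_i > 0`,
`ann_R(W_{n−e_i}) ∘ W_n = W_{n−(n_i−1)e_i}` (as `R`-submodules of `𝒟`); i.e. condition
(3) of `L_d^τ`-admissibility implies the Gorenstein-style condition (4.2) of
Elias–Rossi. -/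
theorem cond3_implies_gorenstein_condition {m d τ : ℕ} {K : Type*} [Field K]
    (hdm : d ≤ m) (H : (Fin d → ℕ) → Fin τ → DP m K)
    (hadm : IsLdAdmissibleSystem hdm H) :
    ∀ n, Pos n → ∀ i : Fin d, 2 ≤ n i →
      DPspan {G | ∃ f ∈ DPann (Wn H (decE n i)), ∃ F ∈ Wn H n, G = contract f F} =
        Wn H (Function.update n i 1) := by
  obtain ⟨-, h2c, h3c⟩ := hadm
  intro n hn i h2
  apply Set.Subset.antisymm
  · refine DPspan_subset (isDPSubmodule_DPspan _) ?_
    rintro _ ⟨f, hf, F, hF, rfl⟩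
    refine mem_Wn_update_one_of_contract_X_eq_zero h3c hn
      ((isDPSubmodule_DPspan _).contract_mem f hF) ?_
    rw [contract_comm, hf _ (contract_X_mem_Wn_decE h2c hn h2 hF)]
  · refine DPspan_subset (isDPSubmodule_DPspan _) ?_
    rintro _ ⟨j, rfl⟩
    exact subset_DPspan _ ⟨_, X_pow_mem_DPann_Wn_decE h2c hn h2, H n j, subset_DPspan _ ⟨j, rfl⟩,
      (contract_X_pow_H h2c hn j).symm⟩
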